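/- Let p and q be polynomials in one variable with nonnegative real coefficients such that the coefficient sequence of each is log-concave and has no internal zeros (i.e. the nonzero coefficients occur on a contiguous range of degrees, and a_{i}^2 >= a_{i-1} a_{i+1} for all i). Then the coefficient sequence of the product p*q is also log-concave with no internal zeros. -/

import Mathlib

/-!
A nonnegative sequence `a` is log-concave without internal zeros exactly when its Toeplitz
matrix `(a (r - s))` is totally positive of order two, i.e. all its `2 × 2` minors are
nonnegative. The Toeplitz matrix of `p * q` is the product of those of `p` and `q`, and by the
Cauchy–Binet formula every `2 × 2` minor of a product of matrices is a sum of products of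
`2 × 2` minors of the factors.
-/

open Polynomial

/-- All coefficients of the polynomial `p` are nonnegative. -/
def HasNonnegCoeffs (p : Polynomial ℝ) : Prop :=
  ∀ i, 0 ≤ p.coeff i

/-- The coefficient sequence of `p` is log-concave: `a_i² ≥ a_{i-1} a_{i+1}` for all
internal indices `i`. -/
def HasLogConcaveCoeffs (p : Polynomial ℝ) : Prop :=
  ∀ i, 0 < i → p.coeff (i - 1) * p.coeff (i + 1) ≤ p.coeff i ^ 2

/-- The coefficient sequence of `p` has no internal zeros: whenever the coefficients in
degrees `i < k` are nonzero and `i < j < k`, the coefficient in degree `j` is also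
nonzero; i.e. the nonzero coefficients occur on a contiguous range of degrees. -/
def HasNoInternalZeros (p : Polynomial ℝ) : Prop :=
  ∀ i j k, i < j → j < k → p.coeff i ≠ 0 → p.coeff k ≠ 0 → p.coeff j ≠ 0

open Finset

/-- Total positivity of order two (Karlin): all `2 × 2` minors with increasing rows and
columns are nonnegative. -/
def IsTP2 {ι κ R : Type*} [LE ι] [LE κ] [Mul R] [LE R] (K : ι → κ → R) : Prop :=
  ∀ ⦃i₁ i₂ j₁ j₂⦄, i₁ ≤ i₂ → j₁ ≤ j₂ → K i₁ j₂ * K i₂ j₁ ≤ K i₁ j₁ * K i₂ j₂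

theorem IsTP2.sum_mul {ι κ μ R : Type*} [LE ι] [LinearOrder κ] [LE μ] [CommRing R]
    [LinearOrder R] [IsStrictOrderedRing R] {K : ι → κ → R} {L : κ → μ → R}
    (hK : IsTP2 K) (hL : IsTP2 L) (S : Finset κ) :
    IsTP2 fun i k => ∑ j ∈ S, K i j * L j k := by
  intro i₁ i₂ k₁ k₂ hi hk
  have hminors : ∀ j j', 0 ≤ (K i₁ j * K i₂ j' - K i₁ j' * K i₂ j) *
      (L j k₁ * L j' k₂ - L j k₂ * L j' k₁) := by
    intro j j'
    rcases le_total j j' with h | h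
    · exact mul_nonneg (sub_nonneg.2 (hK hi h)) (sub_nonneg.2 (hL h hk))
    · exact mul_nonneg_of_nonpos_of_nonpos (by linarith [hK hi h]) (by linarith [hL h hk])
  set g : κ → κ → R := fun j j' =>
    K i₁ j * L j k₁ * (K i₂ j' * L j' k₂) - K i₁ j * L j k₂ * (K i₂ j' * L j' k₁)
  have hdiff : (∑ j ∈ S, K i₁ j * L j k₁) * (∑ j ∈ S, K i₂ j * L j k₂) -
      (∑ j ∈ S, K i₁ j * L j k₂) * (∑ j ∈ S, K i₂ j * L j k₁) = ∑ j ∈ S, ∑ j' ∈ S, g j j' := by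
    simp only [sum_mul_sum, ← sum_sub_distrib, g]
  -- Cauchy–Binet: symmetrizing in `(j, j')` turns the terms into products of minors
  have hsymm : 0 ≤ ∑ j ∈ S, ∑ j' ∈ S, (g j j' + g j' j) :=
    sum_nonneg fun j _ => sum_nonneg fun j' _ => (hminors j j').trans_eq (by ring)
  simp only [sum_add_distrib] at hsymm
  rw [sum_comm (f := fun j j' => g j' j)] at hsymm
  linarith

theorem HasNonnegCoeffs.mul {p q : ℝ[X]} (hp : HasNonnegCoeffs p) (hq : HasNonnegCoeffs q) :
    HasNonnegCoeffs (p * q) := fun n => by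
  rw [coeff_mul]
  exact sum_nonneg fun x _ => mul_nonneg (hp _) (hq _)

namespace HasLogConcaveCoeffs

variable {p : ℝ[X]}

theorem coeff_mul_coeff_succ_le (hp0 : HasNonnegCoeffs p) (hp1 : HasLogConcaveCoeffs p)
    (hp2 : HasNoInternalZeros p) {i j : ℕ} (hij : i ≤ j) :
    p.coeff i * p.coeff (j + 1) ≤ p.coeff (i + 1) * p.coeff j := by
  induction j, hij using Nat.le_induction with
  | base => rw [mul_comm]
  | succ j hij ih =>
    rcases (hp0 i).eq_or_lt with hi | hi
    · rw [← hi, zero_mul]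
      exact mul_nonneg (hp0 _) (hp0 _)
    rcases (hp0 (j + 2)).eq_or_lt with hk | hk
    · rw [← hk, mul_zero]
      exact mul_nonneg (hp0 _) (hp0 _)
    have hj : 0 < p.coeff j := by
      rcases hij.eq_or_lt with rfl | h
      · exact hi
      · exact (hp0 j).lt_of_ne' (hp2 i j (j + 2) h (by omega) hi.ne' hk.ne')
    have hlc : p.coeff j * p.coeff (j + 2) ≤ p.coeff (j + 1) ^ 2 := by
      simpa using hp1 (j + 1) j.succ_pos
    refine le_of_mul_le_mul_left ?_ hj
    calc p.coeff j * (p.coeff i * p.coeff (j + 1 + 1))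
        = p.coeff i * (p.coeff j * p.coeff (j + 2)) := by ring
      _ ≤ p.coeff i * p.coeff (j + 1) ^ 2 := mul_le_mul_of_nonneg_left hlc hi.le
      _ = p.coeff i * p.coeff (j + 1) * p.coeff (j + 1) := by ring
      _ ≤ p.coeff (i + 1) * p.coeff j * p.coeff (j + 1) := mul_le_mul_of_nonneg_right ih (hp0 _)
      _ = p.coeff j * (p.coeff (i + 1) * p.coeff (j + 1)) := by ring

theorem coeff_mul_coeff_add_add_le (hp0 : HasNonnegCoeffs p) (hp1 : HasLogConcaveCoeffs p)
    (hp2 : HasNoInternalZeros p) (x d e : ℕ) :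
    p.coeff x * p.coeff (x + d + e) ≤ p.coeff (x + d) * p.coeff (x + e) := by
  induction d generalizing x e with
  | zero => simp
  | succ d ih =>
    cases e with
    | zero => simp [mul_comm]
    | succ e =>
      calc p.coeff x * p.coeff (x + (d + 1) + (e + 1))
          = p.coeff x * p.coeff (x + d + e + 1 + 1) := by ring_nf
        _ ≤ p.coeff (x + 1) * p.coeff (x + d + e + 1) :=
          coeff_mul_coeff_succ_le hp0 hp1 hp2 (by omega)
        _ = p.coeff (x + 1) * p.coeff (x + 1 + d + e) := by ring_nf
        _ ≤ p.coeff (x + 1 + d) * p.coeff (x + 1 + e) := ih (x + 1) e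
        _ = p.coeff (x + (d + 1)) * p.coeff (x + (e + 1)) := by ring_nf

end HasLogConcaveCoeffs

/-- The Toeplitz matrix `(p.coeff (r - s))_{r,s}` of `p`, with zeros above the diagonal. -/
noncomputable def toeplitzKernel {R : Type*} [Semiring R] (p : R[X]) (r s : ℕ) : R :=
  (X ^ s * p).coeff r

theorem toeplitzKernel_mul_eq_sum {R : Type*} [CommSemiring R] (p q : R[X]) {r N : ℕ}
    (hr : r < N) (t : ℕ) :
    toeplitzKernel (p * q) r t = ∑ s ∈ range N, toeplitzKernel p r s * toeplitzKernel q s t := by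
  have hcomm : X ^ t * (p * q) = (X ^ t * q) * p := by ring
  rw [toeplitzKernel, hcomm, coeff_mul, Nat.sum_antidiagonal_eq_sum_range_succ_mk,
    ← sum_subset (range_subset_range.2 hr) fun s _ hs => ?_]
  · refine sum_congr rfl fun s hs => ?_
    simp only [toeplitzKernel, coeff_X_pow_mul', if_pos (Nat.lt_succ_iff.1 (mem_range.1 hs))]
    exact mul_comm _ _
  · rw [toeplitzKernel, coeff_X_pow_mul', if_neg (by simpa using hs), zero_mul]

theorem IsTP2.toeplitzKernel_mul {R : Type*} [CommRing R] [LinearOrder R] [IsStrictOrderedRing R]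
    {p q : R[X]} (hp : IsTP2 (toeplitzKernel p)) (hq : IsTP2 (toeplitzKernel q)) :
    IsTP2 (toeplitzKernel (p * q)) := by
  intro r₁ r₂ t₁ t₂ hr ht
  simp only [toeplitzKernel_mul_eq_sum p q (Nat.lt_succ_of_le hr),
    toeplitzKernel_mul_eq_sum p q r₂.lt_succ_self]
  exact hp.sum_mul hq (range (r₂ + 1)) hr ht

theorem isTP2_toeplitzKernel {p : ℝ[X]} (hp0 : HasNonnegCoeffs p) (hp1 : HasLogConcaveCoeffs p)
    (hp2 : HasNoInternalZeros p) : IsTP2 (toeplitzKernel p) := by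
  intro r₁ r₂ s₁ s₂ hr hs
  simp only [toeplitzKernel, coeff_X_pow_mul']
  by_cases h : s₂ ≤ r₁
  · rw [if_pos h, if_pos (h.trans hr), if_pos (hs.trans h), if_pos (hs.trans (h.trans hr))]
    have := hp1.coeff_mul_coeff_add_add_le hp0 hp2 (r₁ - s₂) (s₂ - s₁) (r₂ - r₁)
    rwa [show r₁ - s₂ + (s₂ - s₁) + (r₂ - r₁) = r₂ - s₁ by omega,
      show r₁ - s₂ + (s₂ - s₁) = r₁ - s₁ by omega, show r₁ - s₂ + (r₂ - r₁) = r₂ - s₂ by omega]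
      at this
  · rw [if_neg h, zero_mul]
    exact mul_nonneg (by split_ifs <;> simp [hp0 _]) (by split_ifs <;> simp [hp0 _])

theorem HasLogConcaveCoeffs.of_isTP2 {p : ℝ[X]} (h : IsTP2 (toeplitzKernel p)) :
    HasLogConcaveCoeffs p := by
  intro n hn
  have := h (Nat.le_add_right n 1) zero_le_one
  simp only [toeplitzKernel, coeff_X_pow_mul'] at this
  rwa [if_pos (show 1 ≤ n from hn), if_pos (Nat.zero_le _), if_pos (Nat.zero_le _),
    if_pos (Nat.le_add_left 1 n), Nat.sub_zero, Nat.sub_zero, Nat.add_sub_cancel, ← sq] at this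

theorem HasNoInternalZeros.of_isTP2 {p : ℝ[X]} (hp0 : HasNonnegCoeffs p)
    (h : IsTP2 (toeplitzKernel p)) : HasNoInternalZeros p := by
  intro i j k hij hjk hi hk hj
  -- the minor with rows `j, k` and columns `0, j - i` reads `p_i p_k ≤ p_j p_{i+k-j}`
  have := h hjk.le (Nat.zero_le (j - i))
  simp only [toeplitzKernel, coeff_X_pow_mul'] at this
  rw [if_pos (Nat.sub_le j i), if_pos (Nat.zero_le _), if_pos (Nat.zero_le _),
    Nat.sub_sub_self hij.le, Nat.sub_zero, Nat.sub_zero, hj, zero_mul] at this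
  exact (mul_pos ((hp0 i).lt_of_ne' hi) ((hp0 k).lt_of_ne' hk)).not_ge this

/-- Let `p` and `q` be polynomials in one variable with nonnegative real coefficients
such that the coefficient sequence of each is log-concave and has no internal zeros.
Then the coefficient sequence of the product `p * q` is also log-concave with no
internal zeros. -/
theorem mul_logConcave_noInternalZeros (p q : Polynomial ℝ)
    (hp0 : HasNonnegCoeffs p) (hq0 : HasNonnegCoeffs q)
    (hp1 : HasLogConcaveCoeffs p) (hq1 : HasLogConcaveCoeffs q)
    (hp2 : HasNoInternalZeros p) (hq2 : HasNoInternalZeros q) :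
    HasLogConcaveCoeffs (p * q) ∧ HasNoInternalZeros (p * q) := by
  have hK : IsTP2 (toeplitzKernel (p * q)) :=
    (isTP2_toeplitzKernel hp0 hp1 hp2).toeplitzKernel_mul (isTP2_toeplitzKernel hq0 hq1 hq2)
  exact ⟨.of_isTP2 hK, .of_isTP2 (hp0.mul hq0) hK⟩
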